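/- arXiv:2010.11114 — 3 statements merged into one kernel-verified Lean document; each statement's English description precedes it below -/
import Mathlib

section
/- Let A_1,...,A_N be linearly independent vectors in a complex inner product space and define B_1 = A_1/√(G_{1,1}) and, for 2 ≤ n ≤ N, B_n = (A_n - Σ_{i=1}^{n-1} A_i (G_{n-1}^{-1} g_n)_i)/√(S_n), where S_n = G_{n,n} - g_n^H G_{n-1}^{-1} g_n. Then B_1,...,B_N equal the orthonormal vectors produced by the Gram–Schmidt process applied to A_1,...,A_N. -/
open scoped ComplexInnerProductSpace Matrix

/-!
The vector `r = A n - ∑ i, ((G n)⁻¹ *ᵥ g n) i • A i` is the residual of `A n` after solving the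
normal equations `G n *ᵥ c = g n` for its best approximation from the span of the earlier
vectors: `A n - r` lies in that span and `r` is orthogonal to it, and these two properties
characterise the unnormalised Gram–Schmidt vector. Expanding `⟪r, r⟫` with the orthogonality
gives exactly the Schur complement `S n`, so `√(S n) = ‖r‖` is the normalising factor.
-/

open InnerProductSpace Matrix

lemma Submodule.mem_orthogonal_span_iff {𝕜 E : Type*} [RCLike 𝕜] [NormedAddCommGroup E]
    [InnerProductSpace 𝕜 E] {s : Set E} {v : E} :
    v ∈ (span 𝕜 s)ᗮ ↔ ∀ u ∈ s, ⟪u, v⟫_𝕜 = 0 := by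
  rw [← span_singleton_le_iff_mem, ← isOrtho_iff_le, isOrtho_comm, isOrtho_span]
  simp

section GramSchmidt

variable {𝕜 E ι : Type*} [RCLike 𝕜] [NormedAddCommGroup E] [InnerProductSpace 𝕜 E]
  [LinearOrder ι] [LocallyFiniteOrderBot ι] [WellFoundedLT ι]

lemma gramSchmidt_mem_orthogonal_span_Iio (A : ι → E) (n : ι) :
    gramSchmidt 𝕜 A n ∈ (Submodule.span 𝕜 (A '' Set.Iio n))ᗮ := by
  rw [← span_gramSchmidt_Iio, Submodule.mem_orthogonal_span_iff]
  rintro _ ⟨i, hi, rfl⟩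
  exact gramSchmidt_orthogonal 𝕜 A (ne_of_lt hi)

lemma sub_gramSchmidt_mem_span_Iio (A : ι → E) (n : ι) :
    A n - gramSchmidt 𝕜 A n ∈ Submodule.span 𝕜 (A '' Set.Iio n) := by
  rw [sub_eq_iff_eq_add'.mpr (gramSchmidt_def'' 𝕜 A n), ← span_gramSchmidt_Iio]
  exact Submodule.sum_mem _ fun i hi ↦
    Submodule.smul_mem _ _ (Submodule.subset_span ⟨i, Finset.mem_Iio.mp hi, rfl⟩)

lemma gramSchmidt_eq_of_mem_orthogonal {A : ι → E} {n : ι} {v : E}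
    (hv : v ∈ (Submodule.span 𝕜 (A '' Set.Iio n))ᗮ)
    (hsub : A n - v ∈ Submodule.span 𝕜 (A '' Set.Iio n)) :
    gramSchmidt 𝕜 A n = v := by
  set K := Submodule.span 𝕜 (A '' Set.Iio n)
  have hK : gramSchmidt 𝕜 A n - v ∈ K := by
    rw [← sub_sub_sub_cancel_left _ _ (A n)]
    exact K.sub_mem hsub (sub_gramSchmidt_mem_span_Iio A n)
  have hKperp : gramSchmidt 𝕜 A n - v ∈ Kᗮ :=
    Kᗮ.sub_mem (gramSchmidt_mem_orthogonal_span_Iio A n) hv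
  exact sub_eq_zero.mp ((Submodule.mem_bot 𝕜).mp
    (K.inf_orthogonal_eq_bot ▸ Submodule.mem_inf.mpr ⟨hK, hKperp⟩))

end GramSchmidt

section GramResidual

variable (𝕜 : Type*) {E ι : Type*} [RCLike 𝕜] [NormedAddCommGroup E] [InnerProductSpace 𝕜 E]
  [Fintype ι] [DecidableEq ι]

/-- The coefficients solve the normal equations `gram 𝕜 a *ᵥ c = (⟪a j, x⟫)ⱼ`, so this is the
error of the best approximation of `x` from the span of the `a i`. -/
noncomputable def gramResidual (a : ι → E) (x : E) : E :=
  x - ∑ i, ((gram 𝕜 a)⁻¹ *ᵥ fun j ↦ ⟪a j, x⟫_𝕜) i • a i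

variable {𝕜}

omit [DecidableEq ι] in
lemma inner_sum_smul_eq_gram_mulVec (a : ι → E) (c : ι → 𝕜) (j : ι) :
    ⟪a j, ∑ i, c i • a i⟫_𝕜 = (gram 𝕜 a *ᵥ c) j := by
  simp only [inner_sum, inner_smul_right, mulVec, dotProduct, gram_apply, mul_comm]

lemma inner_gramResidual_eq_zero {a : ι → E} (ha : LinearIndependent 𝕜 a) (x : E) (j : ι) :
    ⟪a j, gramResidual 𝕜 a x⟫_𝕜 = 0 := by
  have hdet : IsUnit (gram 𝕜 a).det := (det_gram_ne_zero_iff_linearIndependent.mpr ha).isUnit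
  rw [gramResidual, inner_sub_right, inner_sum_smul_eq_gram_mulVec, mulVec_mulVec,
    mul_nonsing_inv _ hdet, one_mulVec, sub_self]

lemma gramResidual_mem_orthogonal {a : ι → E} (ha : LinearIndependent 𝕜 a) (x : E) :
    gramResidual 𝕜 a x ∈ (Submodule.span 𝕜 (Set.range a))ᗮ := by
  rw [Submodule.mem_orthogonal_span_iff]
  rintro _ ⟨j, rfl⟩
  exact inner_gramResidual_eq_zero ha x j

lemma sub_gramResidual_mem_span (a : ι → E) (x : E) :
    x - gramResidual 𝕜 a x ∈ Submodule.span 𝕜 (Set.range a) := by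
  rw [gramResidual, sub_sub_cancel]
  exact Submodule.sum_mem _ fun i _ ↦ Submodule.smul_mem _ _ (Submodule.subset_span ⟨i, rfl⟩)

lemma inner_self_gramResidual {a : ι → E} (ha : LinearIndependent 𝕜 a) (x : E) :
    ⟪gramResidual 𝕜 a x, gramResidual 𝕜 a x⟫_𝕜 =
      ⟪x, x⟫_𝕜 - star (fun j ↦ ⟪a j, x⟫_𝕜) ⬝ᵥ ((gram 𝕜 a)⁻¹ *ᵥ fun j ↦ ⟪a j, x⟫_𝕜) := by
  have hsum : ∀ c : ι → 𝕜, ⟪∑ i, c i • a i, gramResidual 𝕜 a x⟫_𝕜 = 0 := fun c ↦ by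
    simp only [sum_inner, inner_smul_left, inner_gramResidual_eq_zero ha, mul_zero,
      Finset.sum_const_zero]
  calc ⟪gramResidual 𝕜 a x, gramResidual 𝕜 a x⟫_𝕜
      = ⟪x, gramResidual 𝕜 a x⟫_𝕜 := by
        rw [gramResidual, inner_sub_left, ← gramResidual, hsum, sub_zero]
    _ = ⟪x, x⟫_𝕜 - star (fun j ↦ ⟪a j, x⟫_𝕜) ⬝ᵥ ((gram 𝕜 a)⁻¹ *ᵥ fun j ↦ ⟪a j, x⟫_𝕜) := by
        simp only [gramResidual, inner_sub_right, inner_sum, inner_smul_right, dotProduct,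
          Pi.star_apply, RCLike.star_def, inner_conj_symm, mul_comm]

end GramResidual

lemma Fin.image_Iio_eq_range_comp_castLE {α : Type*} {N : ℕ} (f : Fin N → α) (n : Fin N) :
    f '' Set.Iio n = Set.range (f ∘ Fin.castLE n.isLt.le) := by
  rw [Set.range_comp, Fin.range_castLE]
  rfl

lemma gramSchmidt_eq_gramResidual {𝕜 E : Type*} [RCLike 𝕜] [NormedAddCommGroup E]
    [InnerProductSpace 𝕜 E] {N : ℕ} {A : Fin N → E} (hA : LinearIndependent 𝕜 A) (n : Fin N) :
    gramSchmidt 𝕜 A n = gramResidual 𝕜 (A ∘ Fin.castLE n.isLt.le) (A n) := by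
  have ha : LinearIndependent 𝕜 (A ∘ Fin.castLE n.isLt.le) := hA.comp _ (Fin.castLE_injective _)
  apply gramSchmidt_eq_of_mem_orthogonal <;> rw [Fin.image_Iio_eq_range_comp_castLE]
  · exact gramResidual_mem_orthogonal ha (A n)
  · exact sub_gramResidual_mem_span _ (A n)

/-- The non-iterative formula `B n = (A n - Σ_{i<n} (G_n⁻¹ g_n)_i • A i) / √(S n)`,
where `G n` is the Gram matrix of the first `n` vectors, `g n` its mixed column and
`S n` the Schur complement, produces exactly the orthonormal vectors of the
Gram–Schmidt process applied to the linearly independent family `A`. -/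
theorem noniterative_gramSchmidt
    {V : Type*} [NormedAddCommGroup V] [InnerProductSpace ℂ V]
    {N : ℕ} (A B : Fin N → V) (hA : LinearIndependent ℂ A)
    (G : ∀ n : Fin N, Matrix (Fin n.val) (Fin n.val) ℂ)
    (hG : ∀ (n : Fin N) (i j : Fin n.val),
      G n i j = ⟪A (Fin.castLE n.isLt.le i), A (Fin.castLE n.isLt.le j)⟫)
    (g : ∀ n : Fin N, Fin n.val → ℂ)
    (hg : ∀ (n : Fin N) (i : Fin n.val), g n i = ⟪A (Fin.castLE n.isLt.le i), A n⟫)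
    (S : Fin N → ℂ)
    (hS : ∀ n : Fin N, S n = ⟪A n, A n⟫ - star (g n) ⬝ᵥ ((G n)⁻¹ *ᵥ g n))
    (hB : ∀ n : Fin N, B n = ((Real.sqrt (S n).re : ℂ))⁻¹ •
      (A n - ∑ i : Fin n.val, ((G n)⁻¹ *ᵥ g n) i • A (Fin.castLE n.isLt.le i))) :
    B = @InnerProductSpace.gramSchmidtNormed ℂ V _ _ _ (Fin N) _ _ (inferInstance : WellFoundedLT (Fin N)) A := by
  funext n
  set a := A ∘ Fin.castLE n.isLt.le
  have hGn : G n = gram ℂ a := Matrix.ext (hG n)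
  have hgn : g n = fun i ↦ ⟪a i, A n⟫ := funext (hg n)
  have hSn : √(S n).re = ‖gramResidual ℂ a (A n)‖ := by
    rw [hS, hGn, hgn, ← inner_self_gramResidual (hA.comp _ (Fin.castLE_injective _))]
    exact (norm_eq_sqrt_re_inner (𝕜 := ℂ) _).symm
  rw [hB, hSn, gramSchmidtNormed, gramSchmidt_eq_gramResidual hA, hGn, hgn]
  rfl
end

section
/- Let A_1,...,A_N be linearly independent vectors in a complex inner product space and define B_n as in the non-iterative Gram–Schmidt formula: B_n = (A_n - Σ_{i=1}^{n-1} A_i (G_{n-1}^{-1} g_n)_i)/√(S_n). Then for any m < n, ⟨A_m, B_n⟩ = 0; i.e., B_n is orthogonal to the span of A_1,...,A_{n-1}. -/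
open scoped ComplexInnerProductSpace Matrix

/-! The coefficients `c = G⁻¹ g` solve the normal equations `G c = g`, and the `m`-th normal
equation says exactly that `A n - ∑ cᵢ • Aᵢ` is orthogonal to `A m`. The Gram matrix `G` is
invertible because the `Aᵢ` are linearly independent. -/

open Matrix

section GramProjection

variable {𝕜 E ι : Type*} [RCLike 𝕜] [NormedAddCommGroup E] [InnerProductSpace 𝕜 E] [Fintype ι]

lemma inner_sub_sum_smul_eq_zero_of_gram_mulVec {v : ι → E} {a : E} {c : ι → 𝕜}
    (hc : gram 𝕜 v *ᵥ c = fun j ↦ inner 𝕜 (v j) a) (i : ι) :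
    inner 𝕜 (v i) (a - ∑ j, c j • v j) = 0 := by
  have hrow : ∑ j, inner 𝕜 (v i) (v j) * c j = inner 𝕜 (v i) a := congrFun hc i
  simp only [inner_sub_right, inner_sum, inner_smul_right, ← hrow, mul_comm, sub_self]

lemma gram_mulVec_gram_inv_mulVec [DecidableEq ι] {v : ι → E} (hv : LinearIndependent 𝕜 v)
    (x : ι → 𝕜) : gram 𝕜 v *ᵥ ((gram 𝕜 v)⁻¹ *ᵥ x) = x := by
  rw [mulVec_mulVec, mul_nonsing_inv _ (isUnit_iff_ne_zero.mpr
    (det_gram_ne_zero_iff_linearIndependent.mpr hv)), one_mulVec]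

lemma inner_sub_sum_gram_inv_mulVec_eq_zero [DecidableEq ι] {v : ι → E}
    (hv : LinearIndependent 𝕜 v) (a : E) (i : ι) :
    inner 𝕜 (v i) (a - ∑ j, ((gram 𝕜 v)⁻¹ *ᵥ fun k ↦ inner 𝕜 (v k) a) j • v j) = 0 :=
  inner_sub_sum_smul_eq_zero_of_gram_mulVec (gram_mulVec_gram_inv_mulVec hv _) i

end GramProjection

theorem noniterative_gramSchmidt_orthogonal_general
    {V : Type*} [NormedAddCommGroup V] [InnerProductSpace ℂ V]
    {N : ℕ} (A B : Fin N → V) (hA : LinearIndependent ℂ A)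
    (G : ∀ n : Fin N, Matrix (Fin n.val) (Fin n.val) ℂ)
    (hG : ∀ (n : Fin N) (i j : Fin n.val),
      G n i j = ⟪A (Fin.castLE n.isLt.le i), A (Fin.castLE n.isLt.le j)⟫)
    (g : ∀ n : Fin N, Fin n.val → ℂ)
    (hg : ∀ (n : Fin N) (i : Fin n.val), g n i = ⟪A (Fin.castLE n.isLt.le i), A n⟫)
    (S : Fin N → ℂ)
    (hB : ∀ n : Fin N, B n = ((Real.sqrt (S n).re : ℂ))⁻¹ •
      (A n - ∑ i : Fin n.val, ((G n)⁻¹ *ᵥ g n) i • A (Fin.castLE n.isLt.le i))) :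
    ∀ n m : Fin N, m < n → ⟪A m, B n⟫ = 0 := by
  intro n m hmn
  set w : Fin n.val → V := fun i ↦ A (Fin.castLE n.isLt.le i)
  have hw : LinearIndependent ℂ w := hA.comp _ (Fin.castLE_injective _)
  have hGn : G n = gram ℂ w := Matrix.ext (hG n)
  have hgn : g n = fun i ↦ ⟪w i, A n⟫ := funext (hg n)
  have hm : A m = w ⟨m, hmn⟩ := rfl
  rw [hB n, inner_smul_right, hGn, hgn, hm]
  exact mul_eq_zero_of_right _ (inner_sub_sum_gram_inv_mulVec_eq_zero hw (A n) ⟨m, hmn⟩)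

/-- Each vector produced by the non-iterative Gram–Schmidt formula
`B n = (A n - Σ_{i<n} (G_n⁻¹ g_n)_i • A i) / √(S n)` is orthogonal to all the
preceding vectors `A m`, `m < n` (hence to their span). -/
theorem noniterative_gramSchmidt_orthogonal
    {V : Type*} [NormedAddCommGroup V] [InnerProductSpace ℂ V]
    {N : ℕ} (A B : Fin N → V) (hA : LinearIndependent ℂ A)
    (G : ∀ n : Fin N, Matrix (Fin n.val) (Fin n.val) ℂ)
    (hG : ∀ (n : Fin N) (i j : Fin n.val),
      G n i j = ⟪A (Fin.castLE n.isLt.le i), A (Fin.castLE n.isLt.le j)⟫)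
    (g : ∀ n : Fin N, Fin n.val → ℂ)
    (hg : ∀ (n : Fin N) (i : Fin n.val), g n i = ⟪A (Fin.castLE n.isLt.le i), A n⟫)
    (S : Fin N → ℂ)
    (hS : ∀ n : Fin N, S n = ⟪A n, A n⟫ - star (g n) ⬝ᵥ ((G n)⁻¹ *ᵥ g n))
    (hB : ∀ n : Fin N, B n = ((Real.sqrt (S n).re : ℂ))⁻¹ •
      (A n - ∑ i : Fin n.val, ((G n)⁻¹ *ᵥ g n) i • A (Fin.castLE n.isLt.le i))) :
    ∀ n m : Fin N, m < n → ⟪A m, B n⟫ = 0 :=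
  noniterative_gramSchmidt_orthogonal_general A B hA G hG g hg S hB
end

section
/- Let d_{n1}²,...,d_{nν₀}² be positive reals with minimum d_min² and maximum d_max², ρ = d_min²/d_max², and let N ≥ ν₀. If κ_I > ln(N)/ln(ρ/N + 1), then for every k with 1 ≤ k ≤ ν₀ - 1: Σ_{i=1}^{ν₀-k} d_{ni}² < (Σ_{i=ν₀-k+1}^{ν₀} d_{ni}²) / ((ν₀/(ν₀-k))^{1/κ_I} - 1). -/
/-!
Write `c = (ν₀/(ν₀-k))^{1/κ_I}`. Since `1 < ν₀/(ν₀-k) ≤ ν₀ ≤ N`, the hypothesis on `κ_I` gives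
`1 < c ≤ N^{1/κ_I} < ρ/N + 1`. The head sum has at most `N` terms, each at most `d_max²`, and the
tail sum contains at least one term, which is at least `d_min²`; hence
`(head sum)·(c - 1) ≤ N d_max² (c - 1) < d_max² ρ = d_min² ≤ tail sum`.
-/

open Finset Real

lemma Real.rpow_one_div_lt_of_log_div_log_lt {x a κ : ℝ} (hx : 1 < x) (ha : 1 < a)
    (h : log x / log a < κ) : x ^ (1 / κ) < a := by
  have hloga : 0 < log a := log_pos ha
  have hκ : 0 < κ := (div_pos (log_pos hx) hloga).trans h
  rw [rpow_lt_iff_lt_log (by linarith) (by linarith), one_div_mul_eq_div, div_lt_iff₀ hκ,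
    mul_comm]
  exact (div_lt_iff₀ hloga).mp h

lemma one_lt_div_sub {n k : ℝ} (hk : 0 < k) (hkn : k < n) : 1 < n / (n - k) :=
  (one_lt_div (by linarith)).mpr (by linarith)

lemma div_sub_le_self {n k : ℝ} (hk : 0 ≤ k) (hkn : k + 1 ≤ n) : n / (n - k) ≤ n :=
  div_le_self (by linarith) (by linarith)

lemma one_lt_rpow_div_sub_lt {n k x a κ : ℝ} (hk : 0 < k) (hkn : k + 1 ≤ n) (hnx : n ≤ x)
    (ha : 1 < a) (hκ : log x / log a < κ) :
    1 < (n / (n - k)) ^ (1 / κ) ∧ (n / (n - k)) ^ (1 / κ) < a := by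
  have hκpos : 0 < κ := (div_pos (log_pos (by linarith)) (log_pos ha)).trans hκ
  refine ⟨one_lt_rpow (one_lt_div_sub hk (by linarith)) (one_div_pos.mpr hκpos), ?_⟩
  calc (n / (n - k)) ^ (1 / κ) ≤ x ^ (1 / κ) :=
        rpow_le_rpow (div_nonneg (by linarith) (by linarith))
          ((div_sub_le_self hk.le hkn).trans hnx) (one_div_pos.mpr hκpos).le
    _ < a := rpow_one_div_lt_of_log_div_log_lt (by linarith) ha hκ

lemma Finset.sum_le_card_mul_sup' {ι : Type*} [Fintype ι] (hne : (univ : Finset ι).Nonempty)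
    {f : ι → ℝ} (hf : ∀ i, 0 ≤ f i) (s : Finset ι) :
    ∑ i ∈ s, f i ≤ Fintype.card ι * univ.sup' hne f :=
  calc ∑ i ∈ s, f i ≤ ∑ i, f i := sum_le_univ_sum_of_nonneg hf
    _ ≤ Fintype.card ι * univ.sup' hne f := by
      simpa [nsmul_eq_mul] using sum_le_card_nsmul univ f _ fun i hi => le_sup' f hi

lemma Finset.inf'_le_sum {ι : Type*} [Fintype ι] (hne : (univ : Finset ι).Nonempty)
    {f : ι → ℝ} (hf : ∀ i, 0 ≤ f i) {s : Finset ι} {j : ι} (hj : j ∈ s) :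
    univ.inf' hne f ≤ ∑ i ∈ s, f i :=
  (inf'_le f (mem_univ j)).trans (single_le_sum (fun i _ => hf i) hj)

theorem PMEP_I_consistency_general
    {ν₀ N : ℕ} (hN : ν₀ ≤ N)
    (dsq : Fin ν₀ → ℝ) (hd : ∀ i, 0 < dsq i)
    (hne : (Finset.univ : Finset (Fin ν₀)).Nonempty)
    (dmin dmax ρ κI : ℝ)
    (hmin : dmin = Finset.univ.inf' hne dsq)
    (hmax : dmax = Finset.univ.sup' hne dsq)
    (hρ : ρ = dmin / dmax)
    (hκ : Real.log N / Real.log (ρ / N + 1) < κI) :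
    ∀ k : ℕ, 1 ≤ k → k ≤ ν₀ - 1 →
      ∑ i ∈ Finset.univ.filter (fun i : Fin ν₀ => i.val < ν₀ - k), dsq i
        < (∑ i ∈ Finset.univ.filter (fun i : Fin ν₀ => ν₀ - k ≤ i.val), dsq i)
          / (((ν₀ : ℝ) / ((ν₀ : ℝ) - (k : ℝ))) ^ ((1 : ℝ) / κI) - 1) := by
  intro k hk1 hk2
  have hdmin : 0 < dmin := hmin ▸ (lt_inf'_iff hne).mpr fun i _ => hd i
  have hdmax : 0 < dmax := hmax ▸ (hd ⟨0, by omega⟩).trans_le (le_sup' dsq (mem_univ _))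
  have hkν : (k : ℝ) + 1 ≤ ν₀ := by exact_mod_cast (by omega : k + 1 ≤ ν₀)
  have hνN : (ν₀ : ℝ) ≤ N := by exact_mod_cast hN
  have hk : (0 : ℝ) < k := by exact_mod_cast hk1
  have hNpos : (0 : ℝ) < N := by linarith
  have hρN : 1 < ρ / N + 1 := by rw [hρ]; linarith [show 0 < dmin / dmax / N by positivity]
  obtain ⟨hc, hcρ⟩ := one_lt_rpow_div_sub_lt hk hkν hνN hρN hκ
  have hhead := sum_le_card_mul_sup' hne (fun i => (hd i).le)
    (univ.filter fun i : Fin ν₀ => i.val < ν₀ - k)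
  have htail := inf'_le_sum hne (fun i => (hd i).le)
    (j := ⟨ν₀ - 1, by omega⟩) (s := univ.filter fun i : Fin ν₀ => ν₀ - k ≤ i.val) 
    (by simp only [mem_filter, mem_univ, true_and]; omega)
  rw [Fintype.card_fin, ← hmax] at hhead
  rw [← hmin] at htail
  have hc1 := sub_pos.mpr hc
  rw [lt_div_iff₀ hc1]
  calc _ ≤ (N * dmax) * (((ν₀ : ℝ) / (ν₀ - k)) ^ (1 / κI) - 1) :=
        mul_le_mul_of_nonneg_right (hhead.trans (by gcongr)) hc1.le
    _ < (N * dmax) * (ρ / N) := mul_lt_mul_of_pos_left (by linarith) (mul_pos hNpos hdmax)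
    _ = dmin := by rw [hρ]; field_simp
    _ ≤ _ := htail

/-- Simplified consistency condition for the PMEP-I (inverse penalty) algorithm:
if `κ_I > ln N / ln(ρ/N + 1)` with `ρ = d_min²/d_max²` and `N ≥ ν₀`, then for
every `1 ≤ k ≤ ν₀ - 1`,
`Σ_{i=1}^{ν₀-k} d_i² < (Σ_{i=ν₀-k+1}^{ν₀} d_i²)/((ν₀/(ν₀-k))^{1/κ_I} - 1)`. -/
theorem PMEP_I_consistency
    {ν₀ N : ℕ} (hν : 0 < ν₀) (hN : ν₀ ≤ N)
    (dsq : Fin ν₀ → ℝ) (hd : ∀ i, 0 < dsq i)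
    (hne : (Finset.univ : Finset (Fin ν₀)).Nonempty)
    (dmin dmax ρ κI : ℝ)
    (hmin : dmin = Finset.univ.inf' hne dsq)
    (hmax : dmax = Finset.univ.sup' hne dsq)
    (hρ : ρ = dmin / dmax)
    (hκ : Real.log N / Real.log (ρ / N + 1) < κI) :
    ∀ k : ℕ, 1 ≤ k → k ≤ ν₀ - 1 →
      ∑ i ∈ Finset.univ.filter (fun i : Fin ν₀ => i.val < ν₀ - k), dsq i
        < (∑ i ∈ Finset.univ.filter (fun i : Fin ν₀ => ν₀ - k ≤ i.val), dsq i)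
          / (((ν₀ : ℝ) / ((ν₀ : ℝ) - (k : ℝ))) ^ ((1 : ℝ) / κI) - 1) :=
  PMEP_I_consistency_general hN dsq hd hne dmin dmax ρ κI hmin hmax hρ hκ
end
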